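/- arXiv:math/0702809 — 4 statements merged into one kernel-verified Lean document; each statement's English description precedes it below -/
import Mathlib

section
/- Every n-dimensional nul-filiform Zinbiel algebra over the complex numbers is isomorphic (as an algebra) to the algebra NF_n. -/
/-!
Pick `v` outside `A²`, which has codimension one, and let `e_1 = v`, `e_{k+1} = v ∘ e_k`. The
Zinbiel identity gives `A^i ∘ A^j ⊆ A^{i+j}`; together with `A = ℂ v + A²` this yields
`A^k = ℂ e_k + A^{k+1}`, so, as `A^{n+1} = 0`, the vectors `e_1, …, e_n` form a basis. Applying
the identity to `(e_i ∘ v) ∘ e_j` gives `e_i ∘ v = i e_{i+1}` and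
`(j + 1) e_i ∘ e_{j+1} = i e_{i+1} ∘ e_j`, whose solution `e_i ∘ e_j = C(i+j-1, j) e_{i+j}` is the
multiplication table of `NF_n`.
-/

/-- A bilinear multiplication `mul` is a *Zinbiel* multiplication if it satisfies
`(x∘y)∘z = x∘(y∘z) + x∘(z∘y)`. -/
def IsZinbiel {K A : Type*} [CommRing K] [AddCommGroup A] [Module K A]
    (mul : A →ₗ[K] A →ₗ[K] A) : Prop :=
  ∀ x y z : A, mul (mul x y) z = mul x (mul y z) + mul x (mul z y)

/-- The descending series of a (Zinbiel) algebra: `zpow mul i` is `A^i`,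
with `A^1 = A` and `A^{k+1} = A ∘ A^k` (we also set `A^0 = A` for convenience). -/
def zpow {K A : Type*} [CommRing K] [AddCommGroup A] [Module K A]
    (mul : A →ₗ[K] A →ₗ[K] A) : ℕ → Submodule K A
  | 0 => ⊤
  | 1 => ⊤
  | (k+2) => Submodule.span K {z | ∃ a : A, ∃ b ∈ zpow mul (k+1), z = mul a b}

/-- The bilinear multiplication on `Fin n → ℂ` determined by structure constants `c`:
`e_i ∘ e_j = ∑ k, c i j k • e_k`. -/
noncomputable def mulOf (n : ℕ) (c : Fin n → Fin n → Fin n → ℂ) :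
    (Fin n → ℂ) →ₗ[ℂ] (Fin n → ℂ) →ₗ[ℂ] (Fin n → ℂ) :=
  LinearMap.mk₂ ℂ (fun x y k => ∑ i, ∑ j, x i * y j * c i j k)
    (fun x x' y => by
      funext k
      simp [add_mul, Finset.sum_add_distrib])
    (fun a x y => by
      funext k
      simp [Finset.mul_sum, mul_assoc])
    (fun x y y' => by
      funext k
      simp [mul_add, add_mul, Finset.sum_add_distrib])
    (fun a x y => by
      funext k
      simp [Finset.mul_sum, mul_assoc, mul_left_comm])

/-- Two bilinear multiplications give isomorphic algebras if there is a linear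
equivalence intertwining them. -/
def Isom {A B : Type*} [AddCommGroup A] [Module ℂ A] [AddCommGroup B] [Module ℂ B]
    (mulA : A →ₗ[ℂ] A →ₗ[ℂ] A) (mulB : B →ₗ[ℂ] B →ₗ[ℂ] B) : Prop :=
  ∃ f : A ≃ₗ[ℂ] B, ∀ x y : A, f (mulA x y) = mulB (f x) (f y)

/-- Structure constants of the nul-filiform algebra `NF_n`:
`e_i ∘ e_j = C(i+j-1, j) e_{i+j}` for `2 ≤ i+j ≤ n` (1-indexed). -/
noncomputable def NFc (n : ℕ) : Fin n → Fin n → Fin n → ℂ := fun i j k =>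
  if (i : ℕ) + j + 1 = (k : ℕ) then (((i : ℕ) + j + 1).choose ((j : ℕ) + 1) : ℂ) else 0

/-- The nul-filiform Zinbiel algebra `NF_n` (as a multiplication on `Fin n → ℂ`). -/
noncomputable def NFmul (n : ℕ) : (Fin n → ℂ) →ₗ[ℂ] (Fin n → ℂ) →ₗ[ℂ] (Fin n → ℂ) :=
  mulOf n (NFc n)

section DescendingSeries

variable {K A : Type*} [CommRing K] [AddCommGroup A] [Module K A] (mul : A →ₗ[K] A →ₗ[K] A)

theorem zpow_succ_succ (k : ℕ) :
    zpow mul (k + 2) = Submodule.span K {z | ∃ a : A, ∃ b ∈ zpow mul (k + 1), z = mul a b} := by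
  rw [zpow]

theorem mul_mem_zpow_succ {j : ℕ} (x : A) {y : A} (hy : y ∈ zpow mul j) :
    mul x y ∈ zpow mul (j + 1) := by
  cases j with
  | zero => exact Submodule.mem_top
  | succ m => exact Submodule.subset_span ⟨x, y, hy, rfl⟩

theorem zpow_antitone : Antitone (zpow mul) := by
  refine antitone_nat_of_succ_le fun k => ?_
  induction k with
  | zero => exact le_top
  | succ k ih =>
    cases k with
    | zero => exact le_top
    | succ m =>
      rw [zpow_succ_succ, Submodule.span_le]
      rintro z ⟨a, b, hb, rfl⟩
      exact mul_mem_zpow_succ mul a (ih hb)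

/-- `rightPow mul v k = v ∘ (v ∘ ⋯ ∘ (v ∘ v))` with `k + 1` factors, i.e. `e_{k+1}` in the
paper's 1-indexed basis `e_1 = v`, `e_{k+1} = v ∘ e_k`. -/
def rightPow (v : A) : ℕ → A
  | 0 => v
  | k + 1 => mul v (rightPow v k)

@[simp]
theorem rightPow_zero (v : A) : rightPow mul v 0 = v := rfl

theorem rightPow_succ (v : A) (k : ℕ) : rightPow mul v (k + 1) = mul v (rightPow mul v k) := rfl

theorem rightPow_mem_zpow (v : A) (k : ℕ) : rightPow mul v k ∈ zpow mul (k + 1) := by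
  induction k with
  | zero => exact Submodule.mem_top
  | succ k ih => exact mul_mem_zpow_succ mul v ih

end DescendingSeries

namespace IsZinbiel

variable {K A : Type*} [CommRing K] [AddCommGroup A] [Module K A] {mul : A →ₗ[K] A →ₗ[K] A}

theorem mul_mem_zpow (hzin : IsZinbiel mul) {i j : ℕ} {x y : A}
    (hx : x ∈ zpow mul i) (hy : y ∈ zpow mul j) : mul x y ∈ zpow mul (i + j) := by
  obtain rfl | rfl | ⟨m, rfl⟩ : i = 0 ∨ i = 1 ∨ ∃ m, i = m + 2 := by
    rcases i with _ | _ | m <;> simp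
  · simpa using zpow_antitone mul j.le_succ (mul_mem_zpow_succ mul x hy)
  · simpa [add_comm] using mul_mem_zpow_succ mul x hy
  rw [zpow_succ_succ] at hx
  induction hx using Submodule.span_induction with
  | mem z hz =>
    obtain ⟨a, b, hb, rfl⟩ := hz
    -- both inner products in `a ∘ (b ∘ y) + a ∘ (y ∘ b)` have smaller total degree
    rw [hzin a b y]
    have hby := mul_mem_zpow_succ mul a (hzin.mul_mem_zpow hb hy)
    have hyb := mul_mem_zpow_succ mul a (hzin.mul_mem_zpow hy hb)
    rw [show m + 1 + j + 1 = m + 2 + j by omega] at hby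
    rw [show j + (m + 1) + 1 = m + 2 + j by omega] at hyb
    exact add_mem hby hyb
  | zero => simp
  | add u w _ _ hu hw => simpa using add_mem hu hw
  | smul c u _ hu => simpa using Submodule.smul_mem _ c hu
termination_by i + j

theorem zpow_succ_le_span_rightPow_sup (hzin : IsZinbiel mul) {v : A}
    (hv : ⊤ ≤ (K ∙ v) ⊔ zpow mul 2) (k : ℕ) :
    zpow mul (k + 1) ≤ (K ∙ rightPow mul v k) ⊔ zpow mul (k + 2) := by
  induction k with
  | zero => simpa [zpow] using hv
  | succ k ih =>
    rw [zpow_succ_succ, Submodule.span_le]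
    rintro _ ⟨a, b, hb, rfl⟩
    obtain ⟨_, hcv, a₂, ha₂, rfl⟩ := Submodule.mem_sup.mp (hv (Submodule.mem_top (x := a)))
    obtain ⟨c, rfl⟩ := Submodule.mem_span_singleton.mp hcv
    obtain ⟨_, hdg, b₂, hb₂, rfl⟩ := Submodule.mem_sup.mp (ih hb)
    obtain ⟨d, rfl⟩ := Submodule.mem_span_singleton.mp hdg
    have hvb : mul v b₂ ∈ zpow mul (k + 3) := mul_mem_zpow_succ mul v hb₂
    have hag : mul a₂ (rightPow mul v k) ∈ zpow mul (k + 3) := by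
      simpa [add_comm] using hzin.mul_mem_zpow ha₂ (rightPow_mem_zpow mul v k)
    have hab : mul a₂ b₂ ∈ zpow mul (k + 3) :=
      zpow_antitone mul (by omega) (hzin.mul_mem_zpow ha₂ hb₂)
    simp only [map_add, map_smul, LinearMap.add_apply, LinearMap.smul_apply, smul_add,
      ← rightPow_succ, SetLike.mem_coe]
    refine add_mem (add_mem ?_ ?_) (add_mem ?_ ?_)
    · exact Submodule.mem_sup_left (Submodule.smul_mem _ _ (Submodule.smul_mem _ _
        (Submodule.mem_span_singleton_self _)))
    · exact Submodule.mem_sup_right (Submodule.smul_mem _ _ hag)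
    · exact Submodule.mem_sup_right (Submodule.smul_mem _ _ hvb)
    · exact Submodule.mem_sup_right hab

theorem top_le_span_rightPow_sup (hzin : IsZinbiel mul) {v : A}
    (hv : ⊤ ≤ (K ∙ v) ⊔ zpow mul 2) (m : ℕ) :
    ⊤ ≤ Submodule.span K (Set.range fun i : Fin m => rightPow mul v i) ⊔ zpow mul (m + 1) := by
  induction m with
  | zero => simp [zpow]
  | succ m ih =>
    refine ih.trans (sup_le ?_
      ((hzin.zpow_succ_le_span_rightPow_sup hv m).trans (sup_le ?_ le_sup_right)))
    · exact le_sup_of_le_left (Submodule.span_mono fun _ ⟨i, hi⟩ => ⟨i.castSucc, hi⟩)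
    · exact le_sup_of_le_left ((Submodule.span_singleton_le_iff_mem _ _).mpr
        (Submodule.subset_span ⟨Fin.last m, rfl⟩))

end IsZinbiel

namespace IsZinbiel

variable {K A : Type*} [Field K] [CharZero K] [AddCommGroup A] [Module K A]
  {mul : A →ₗ[K] A →ₗ[K] A}

theorem rightPow_mul_self (hzin : IsZinbiel mul) (v : A) (i : ℕ) :
    mul (rightPow mul v i) v = ((i : K) + 1) • rightPow mul v (i + 1) := by
  induction i with
  | zero => simp [rightPow_succ]
  | succ i ih =>
    rw [rightPow_succ, hzin, ih, map_smul, ← rightPow_succ, ← rightPow_succ,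
      rightPow_succ mul v (i + 1)]
    push_cast
    module

theorem rightPow_mul_rightPow (hzin : IsZinbiel mul) (v : A) (i j : ℕ) :
    mul (rightPow mul v i) (rightPow mul v j) =
      (((i + j + 1).choose (j + 1) : ℕ) : K) • rightPow mul v (i + j + 1) := by
  induction j generalizing i with
  | zero => simp [rightPow_mul_self hzin]
  | succ j ih =>
    have hrec := hzin (rightPow mul v i) v (rightPow mul v j)
    rw [rightPow_mul_self hzin, rightPow_mul_self hzin, LinearMap.map_smul₂, map_smul, ih,
      ← rightPow_succ, show i + 1 + j + 1 = i + (j + 1) + 1 by omega] at hrec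
    have hchoose := Nat.choose_succ_right_eq (i + (j + 1) + 1) (j + 1)
    rw [show i + (j + 1) + 1 - (j + 1) = i + 1 by omega] at hchoose
    have hne : ((j : K) + 2) ≠ 0 := by exact_mod_cast (j + 1).succ_ne_zero
    refine smul_right_injective A hne ?_
    have hcast : ((((i + (j + 1) + 1).choose (j + 1 + 1) : ℕ) : K) * ((j : K) + 2)) =
        (((i + (j + 1) + 1).choose (j + 1) : ℕ) : K) * ((i : K) + 1) := by
      exact_mod_cast hchoose
    linear_combination (norm := module) -hrec - hcast • rightPow mul v (i + (j + 1) + 1)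

end IsZinbiel

theorem Submodule.exists_top_le_span_singleton_sup {K V : Type*} [DivisionRing K] [AddCommGroup V]
    [Module K V] [FiniteDimensional K V] (W : Submodule K V)
    (hW : Module.finrank K V ≤ Module.finrank K W + 1) : ∃ v, ⊤ ≤ (K ∙ v) ⊔ W := by
  by_cases htop : W = ⊤
  · exact ⟨0, by simp [htop]⟩
  obtain ⟨v, -, hv⟩ := SetLike.exists_of_lt (lt_top_iff_ne_top.mpr htop)
  refine ⟨v, (Submodule.eq_top_of_finrank_eq (le_antisymm (Submodule.finrank_le _) ?_)).ge⟩
  have hlt : W < (K ∙ v) ⊔ W :=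
    lt_of_le_of_ne le_sup_right fun h =>
      hv (h ▸ Submodule.mem_sup_left (Submodule.mem_span_singleton_self v))
  have := Submodule.finrank_lt_finrank_of_lt hlt
  omega

theorem mulOf_single_single (n : ℕ) (c : Fin n → Fin n → Fin n → ℂ) (i j : Fin n) :
    mulOf n c (Pi.single i 1) (Pi.single j 1) = c i j := by
  ext k
  rw [mulOf, LinearMap.mk₂_apply,
    Finset.sum_eq_single i (fun b _ hb => by simp [Pi.single_apply, hb]) (by simp),
    Finset.sum_eq_single j (fun b _ hb => by simp [hb]) (by simp)]
  simp

theorem isom_mulOf_of_basis {A : Type*} [AddCommGroup A] [Module ℂ A] {n : ℕ}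
    (mul : A →ₗ[ℂ] A →ₗ[ℂ] A) (c : Fin n → Fin n → Fin n → ℂ) (b : Module.Basis (Fin n) ℂ A)
    (hb : ∀ i j, mul (b i) (b j) = ∑ k, c i j k • b k) : Isom mul (mulOf n c) := by
  refine ⟨b.equivFun, fun x y => ?_⟩
  have hext : mul.compr₂ b.equivFun.toLinearMap =
      (mulOf n c).compl₁₂ b.equivFun.toLinearMap b.equivFun.toLinearMap :=
    LinearMap.ext_basis b b fun i j => by
      have hbi (i : Fin n) : b.equivFun (b i) = Pi.single i 1 := by
        simp [Module.Basis.equivFun_apply, Finsupp.single_eq_pi_single]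
      simp only [LinearMap.compr₂_apply, LinearMap.compl₁₂_apply, LinearEquiv.coe_coe, hb,
        ← b.equivFun_symm_apply, LinearEquiv.apply_symm_apply, hbi, mulOf_single_single]
  exact LinearMap.congr_fun₂ hext x y

theorem sum_NFc_smul {M : Type*} [AddCommGroup M] [Module ℂ M] {n : ℕ} (e : ℕ → M)
    (he : ∀ m, n ≤ m → e m = 0) (i j : Fin n) :
    ∑ k : Fin n, NFc n i j k • e k =
      (((i + j + 1 : ℕ).choose (j + 1) : ℕ) : ℂ) • e (i + j + 1) := by
  simp only [NFc, ite_smul, zero_smul]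
  rw [Fin.sum_univ_eq_sum_range
    (fun k => if (i : ℕ) + j + 1 = k then (((i + j + 1 : ℕ).choose (j + 1) : ℕ) : ℂ) • e k else 0),
    Finset.sum_ite_eq]
  split_ifs with h
  · rfl
  · rw [he _ (by simpa using h), smul_zero]

/-- Every `n`-dimensional nul-filiform complex Zinbiel algebra is
isomorphic to `NF_n`. -/
theorem nulfiliform_iso_NF (n : ℕ) (A : Type*) [AddCommGroup A] [Module ℂ A]
    [FiniteDimensional ℂ A]
    (mul : A →ₗ[ℂ] A →ₗ[ℂ] A) (hzin : IsZinbiel mul)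
    (hdim : Module.finrank ℂ A = n)
    (hnulfil : ∀ i : ℕ, 1 ≤ i → i ≤ n + 1 →
      Module.finrank ℂ (zpow mul i) = (n + 1) - i) :
    Isom mul (NFmul n) := by
  have hbot : zpow mul (n + 1) = ⊥ :=
    Submodule.finrank_eq_zero.mp (by simpa using hnulfil (n + 1) (by omega) le_rfl)
  obtain ⟨v, hv⟩ := (zpow mul 2).exists_top_le_span_singleton_sup (by
    rcases n with _ | n
    · omega
    · have := hnulfil 2 (by omega) (by omega)
      omega)
  have hspan := hzin.top_le_span_rightPow_sup hv n
  rw [hbot, sup_bot_eq] at hspan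
  have hvanish (m : ℕ) (hm : n ≤ m) : rightPow mul v m = 0 := by
    simpa [hbot] using zpow_antitone mul (by omega : n + 1 ≤ m + 1) (rightPow_mem_zpow mul v m)
  refine isom_mulOf_of_basis mul (NFc n) (basisOfTopLeSpanOfCardEqFinrank _ hspan (by simp [hdim]))
    fun i j => ?_
  simp only [coe_basisOfTopLeSpanOfCardEqFinrank]
  rw [hzin.rightPow_mul_rightPow, sum_NFc_smul _ hvanish]
end

section
/- The n-dimensional complex algebra NF_n, with basis e_1, …, e_n and multiplication e_i∘e_j = C(i+j−1, j)·e_{i+j} for 2 ≤ i+j ≤ n and all other products of basis vectors zero, satisfies the Zinbiel identity (x∘y)∘z = x∘(y∘z) + x∘(z∘y) for all its elements, i.e. NF_n is a Zinbiel algebra. -/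
section Aux

/-- Sum of a delta-supported function over `Fin n`. -/
lemma sum_delta (n a : ℕ) (f : Fin n → ℂ) :
    ∑ p : Fin n, (if a = (p : ℕ) then f p else 0) =
      if h : a < n then f ⟨a, h⟩ else 0 := by
  split_ifs with h
  · rw [Finset.sum_eq_single ⟨a, h⟩]
    · simp
    · intro b _ hb
      rw [if_neg]
      intro hab
      exact hb (Fin.ext hab.symm)
    · simp
  · apply Finset.sum_eq_zero
    intro p _
    rw [if_neg]
    intro hap
    omega

lemma binom (i j q : ℕ) :
    (i + j + 1).choose (j + 1) * (i + j + q + 2).choose (q + 1) =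
      ((j + q + 1).choose (q + 1) + (j + q + 1).choose (j + 1)) *
        (i + j + q + 2).choose (j + q + 2) := by
  have h1 : (j + q + 1).choose (j + 1) = (j + q + 1).choose q :=
    Nat.choose_symm_of_eq_add (by omega)
  have h2 : (j + q + 2).choose (q + 1) =
      (j + q + 1).choose q + (j + q + 1).choose (q + 1) :=
    Nat.choose_succ_succ' (j + q + 1) q
  have h3 := Nat.choose_mul (n := i + j + q + 2) (k := j + q + 2) (s := q + 1)
    (by omega)
  rw [h1, add_comm ((j + q + 1).choose (q + 1)), ← h2]
  rw [show i + j + q + 2 - (q + 1) = i + j + 1 by omega,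
      show j + q + 2 - (q + 1) = j + 1 by omega] at h3
  linarith [h3]

end Aux


lemma NFc_key (n : ℕ) (i j q k : Fin n) :
    ∑ p : Fin n, NFc n i j p * NFc n p q k =
      ∑ p : Fin n, (NFc n j q p + NFc n q j p) * NFc n i p k := by
  simp only [NFc, ite_mul, zero_mul, add_mul, Finset.sum_add_distrib]
  rw [sum_delta, sum_delta, sum_delta]
  simp only [Fin.val_mk]
  split_ifs <;>
    first
      | (exfalso; omega)
      | simp
      | (norm_cast
         rw [show (i : ℕ) + ↑j + 1 + ↑q + 1 = ↑i + ↑j + ↑q + 2 by omega,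
             show (i : ℕ) + (↑j + ↑q + 1) + 1 = ↑i + ↑j + ↑q + 2 by omega,
             show (i : ℕ) + (↑q + ↑j + 1) + 1 = ↑i + ↑j + ↑q + 2 by omega,
             show (j : ℕ) + ↑q + 1 + 1 = ↑j + ↑q + 2 by omega,
             show (q : ℕ) + ↑j + 1 + 1 = ↑j + ↑q + 2 by omega,
             show (q : ℕ) + ↑j + 1 = ↑j + ↑q + 1 by omega,
             ← add_mul]
         exact binom ↑i ↑j ↑q)

lemma sum_swap3 {ι : Type*} [Fintype ι] (F : ι → ι → ι → ℂ) :
    ∑ p, ∑ b, ∑ q, F p b q = ∑ b, ∑ q, ∑ p, F p b q := by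
  rw [Finset.sum_comm]
  exact Finset.sum_congr rfl fun b _ => Finset.sum_comm

lemma sum_swap4 {ι : Type*} [Fintype ι] (F : ι → ι → ι → ι → ℂ) :
    ∑ p, ∑ q, ∑ a, ∑ b, F p q a b = ∑ a, ∑ b, ∑ q, ∑ p, F p q a b := by
  rw [Finset.sum_comm]
  rw [show (∑ q, ∑ p, ∑ a, ∑ b, F p q a b) = ∑ q, ∑ a, ∑ b, ∑ p, F p q a b from
    Finset.sum_congr rfl fun q _ => sum_swap3 _]
  rw [Finset.sum_comm]
  exact Finset.sum_congr rfl fun a _ => Finset.sum_comm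

/-- `NF_n` is a Zinbiel algebra. -/
theorem NF_isZinbiel (n : ℕ) : IsZinbiel (NFmul n) := by
  intro x y z
  funext k
  have happ : ∀ (u v : Fin n → ℂ) (k : Fin n),
      NFmul n u v k = ∑ a, ∑ b, u a * v b * NFc n a b k := fun _ _ _ => rfl
  rw [Pi.add_apply, happ, happ, happ]
  simp only [happ]
  simp only [Finset.sum_mul, Finset.mul_sum]
  rw [sum_swap4 (fun p q a b => x a * y b * NFc n a b p * z q * NFc n p q k)]
  rw [show (∑ a, ∑ p, ∑ b, ∑ q : Fin n, x a * (y b * z q * NFc n b q p) * NFc n a p k)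
      = ∑ a, ∑ b, ∑ q, ∑ p : Fin n, x a * (y b * z q * NFc n b q p) * NFc n a p k from
    Finset.sum_congr rfl fun a _ => sum_swap3 _]
  rw [show (∑ a, ∑ p, ∑ b, ∑ q : Fin n, x a * (z b * y q * NFc n b q p) * NFc n a p k)
      = ∑ a, ∑ b, ∑ q, ∑ p : Fin n, x a * (z q * y b * NFc n q b p) * NFc n a p k from
    Finset.sum_congr rfl fun a _ => by
      rw [sum_swap3 _]; exact Finset.sum_comm]
  rw [← Finset.sum_add_distrib]
  refine Finset.sum_congr rfl fun a _ => ?_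
  rw [← Finset.sum_add_distrib]
  refine Finset.sum_congr rfl fun b _ => ?_
  rw [← Finset.sum_add_distrib]
  refine Finset.sum_congr rfl fun q _ => ?_
  calc ∑ p, x a * y b * NFc n a b p * z q * NFc n p q k
      = x a * y b * z q * ∑ p, NFc n a b p * NFc n p q k := by
        rw [Finset.mul_sum]; exact Finset.sum_congr rfl fun p _ => by ring
    _ = x a * y b * z q * ∑ p, (NFc n b q p + NFc n q b p) * NFc n a p k := by
        rw [NFc_key]
    _ = ∑ p, (x a * (y b * z q * NFc n b q p) * NFc n a p k
          + x a * (z q * y b * NFc n q b p) * NFc n a p k) := by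
        rw [Finset.mul_sum]; exact Finset.sum_congr rfl fun p _ => by ring
    _ = _ := Finset.sum_add_distrib
end

section
/- Let A be a Zinbiel algebra over a field of characteristic zero, let x ∈ A, and define e_1 = x and e_{k+1} = x∘e_k for k ≥ 1. Then e_i∘e_j = C(i+j−1, j)·e_{i+j} for all i, j ≥ 1; in particular e_i∘e_1 = i·e_{i+1} for all i ≥ 1. -/
/-!
Shift indices so that `f n = e_{n+1}`; then the claim reads `f i ∘ f j = C(i+j+1, j+1) • f (i+j+1)`.
Induct on `i + j`: for `i = 0` it is the recursion itself, and for `f (i+1) = x ∘ f i` the Zinbiel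
identity splits `(x ∘ f i) ∘ f j` into `x ∘ (f i ∘ f j) + x ∘ (f j ∘ f i)`, both of smaller total
degree, so the coefficients add up by Pascal's rule.
-/

namespace IsZinbiel

variable {K A : Type*} [CommRing K] [AddCommGroup A] [Module K A] {mul : A →ₗ[K] A →ₗ[K] A}

theorem mul_rightNormedPow (hzin : IsZinbiel mul) {f : ℕ → A}
    (hf : ∀ n, f (n + 1) = mul (f 0) (f n)) (i j : ℕ) :
    mul (f i) (f j) = (i + j + 1).choose (j + 1) • f (i + j + 1) := by
  induction hn : i + j generalizing i j with
  | zero =>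
    obtain ⟨rfl, rfl⟩ : i = 0 ∧ j = 0 := by omega
    simp [hf]
  | succ n ih =>
    cases i with
    | zero =>
      obtain rfl : j = n + 1 := by omega
      simp [hf]
    | succ i =>
      have hpascal :
          (n + 1).choose (j + 1) + (n + 1).choose (i + 1) = (n + 1 + 1).choose (j + 1) := by
        rw [Nat.choose_symm_of_eq_add (show n + 1 = i + 1 + j by omega),
          Nat.choose_succ_succ' (n + 1) j, add_comm]
      calc mul (f (i + 1)) (f j)
          = mul (f 0) (mul (f i) (f j)) + mul (f 0) (mul (f j) (f i)) := by rw [hf, hzin]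
        _ = (n + 1).choose (j + 1) • f (n + 1 + 1) + (n + 1).choose (i + 1) • f (n + 1 + 1) := by
          rw [ih i j (by omega), ih j i (by omega), map_nsmul, map_nsmul, ← hf]
        _ = (n + 1 + 1).choose (j + 1) • f (n + 1 + 1) := by rw [← add_nsmul, hpascal]

end IsZinbiel

theorem zinbiel_powers_mul_general {K : Type*} [Field K]
    {A : Type*} [AddCommGroup A] [Module K A]
    (mul : A →ₗ[K] A →ₗ[K] A) (hzin : IsZinbiel mul) (x : A)
    (e : ℕ → A) (h1 : e 1 = x) (hrec : ∀ k : ℕ, 1 ≤ k → e (k + 1) = mul x (e k)) :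
    (∀ i j : ℕ, 1 ≤ i → 1 ≤ j →
        mul (e i) (e j) = (((i + j - 1).choose j : ℕ) : K) • e (i + j)) ∧
    (∀ i : ℕ, 1 ≤ i → mul (e i) (e 1) = (i : K) • e (i + 1)) := by
  have hpow (i j : ℕ) : mul (e (i + 1)) (e (j + 1)) = (i + j + 1).choose (j + 1) • e (i + j + 2) :=
    hzin.mul_rightNormedPow (f := fun n ↦ e (n + 1))
      (fun n ↦ by rw [h1]; exact hrec (n + 1) (by omega)) i j
  have hmul (i j : ℕ) (hi : 1 ≤ i) (hj : 1 ≤ j) :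
      mul (e i) (e j) = (((i + j - 1).choose j : ℕ) : K) • e (i + j) := by
    obtain ⟨i, rfl⟩ := Nat.exists_eq_add_of_le' hi
    obtain ⟨j, rfl⟩ := Nat.exists_eq_add_of_le' hj
    rw [Nat.cast_smul_eq_nsmul, hpow, show i + 1 + (j + 1) = i + j + 2 by omega,
      show i + j + 2 - 1 = i + j + 1 by omega]
  refine ⟨hmul, fun i hi ↦ ?_⟩
  simpa using hmul i 1 hi le_rfl

/-- In a Zinbiel algebra over a field of characteristic zero, the
right-normed powers `e_1 = x`, `e_{k+1} = x ∘ e_k` satisfy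
`e_i ∘ e_j = C(i+j-1, j) • e_{i+j}`; in particular `e_i ∘ e_1 = i • e_{i+1}`. -/
theorem zinbiel_powers_mul {K : Type*} [Field K] [CharZero K]
    {A : Type*} [AddCommGroup A] [Module K A]
    (mul : A →ₗ[K] A →ₗ[K] A) (hzin : IsZinbiel mul) (x : A)
    (e : ℕ → A) (h1 : e 1 = x) (hrec : ∀ k : ℕ, 1 ≤ k → e (k + 1) = mul x (e k)) :
    (∀ i j : ℕ, 1 ≤ i → 1 ≤ j →
        mul (e i) (e j) = (((i + j - 1).choose j : ℕ) : K) • e (i + j)) ∧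
    (∀ i : ℕ, 1 ≤ i → mul (e i) (e 1) = (i : K) • e (i + 1)) :=
  zinbiel_powers_mul_general mul hzin x e h1 hrec
end

section
/- An n-dimensional complex Zinbiel algebra is generated as an algebra by a single element if and only if it is isomorphic to the algebra NF_n. -/
/-- `x` generates the algebra `(A, mul)`: every submodule containing `x` and closed under
the multiplication is the whole algebra. -/
def GeneratedBy {A : Type*} [AddCommGroup A] [Module ℂ A]
    (mul : A →ₗ[ℂ] A →ₗ[ℂ] A) (x : A) : Prop :=
  ∀ p : Submodule ℂ A, x ∈ p → (∀ a ∈ p, ∀ b ∈ p, mul a b ∈ p) → p = ⊤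


section Aux

variable {A : Type*} [AddCommGroup A] [Module ℂ A]

/-- `pw mul x k` is the power `x^{k+1}` (0-indexed). -/
def pw (mul : A →ₗ[ℂ] A →ₗ[ℂ] A) (x : A) : ℕ → A
  | 0 => x
  | (k+1) => mul x (pw mul x k)

lemma pw_mul {mul : A →ₗ[ℂ] A →ₗ[ℂ] A} (hz : IsZinbiel mul) (x : A) :
    ∀ i j : ℕ, mul (pw mul x i) (pw mul x j)
      = (((i+j+1).choose (j+1) : ℂ)) • pw mul x (i+j+1) := by
  have key : ∀ s : ℕ, ∀ i j : ℕ, i + j = s → mul (pw mul x i) (pw mul x j)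
      = (((i+j+1).choose (j+1) : ℂ)) • pw mul x (i+j+1) := by
    intro s
    induction s using Nat.strong_induction_on with
    | _ s ih =>
      intro i j hij
      match i with
      | 0 => simp [pw, Nat.choose_self]
      | (i+1) =>
        have h1 : mul (pw mul x (i+1)) (pw mul x j)
            = mul x (mul (pw mul x i) (pw mul x j)) + mul x (mul (pw mul x j) (pw mul x i)) := by
          rw [show pw mul x (i+1) = mul x (pw mul x i) from rfl, hz]
        have hs : i + j < s := by omega
        have hs' : j + i < s := by omega
        rw [h1, ih _ hs i j rfl, ih _ hs' j i rfl]
        have e2 : j + i + 1 = i + j + 1 := by ring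
        rw [e2, map_smul, map_smul]
        rw [show mul x (pw mul x (i+j+1)) = pw mul x (i+j+2) from rfl]
        rw [show i + 1 + j + 1 = i + j + 2 by ring]
        rw [← add_smul]
        congr 2
        have h3 : (i+j+1).choose (i+1) = (i+j+1).choose j := by
          exact Nat.choose_symm_of_eq_add (by omega)
        rw [h3, ← Nat.cast_add, add_comm ((i+j+1).choose (j+1))]
        rw [← Nat.choose_succ_succ]
  exact fun i j => key (i+j) i j rfl


section Struct
variable [FiniteDimensional ℂ A] {mul : A →ₗ[ℂ] A →ₗ[ℂ] A} {x : A} {n : ℕ}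

lemma exists_dep (hdim : Module.finrank ℂ A = n) :
    ∃ k : ℕ, pw mul x k ∈ Submodule.span ℂ (Set.range fun i : Fin k => pw mul x i) := by
  by_contra hcon
  push_neg at hcon
  have hind : ∀ k : ℕ, LinearIndependent ℂ (fun i : Fin k => pw mul x i) := by
    intro k
    induction k with
    | zero => exact linearIndependent_empty_type
    | succ k ih =>
      have he : (fun i : Fin (k+1) => pw mul x i)
          = Fin.snoc (fun i : Fin k => pw mul x i) (pw mul x k) := by
        funext i
        refine Fin.lastCases ?_ ?_ i
        · simp [Fin.snoc_last]
        · intro j; simp [Fin.snoc_castSucc]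
      rw [he, linearIndependent_fin_snoc]
      exact ⟨ih, hcon k⟩
  have h1 : (n+1 : ℕ) ≤ Module.finrank ℂ A := by
    simpa using (hind (n+1)).fintype_card_le_finrank
  omega

lemma span_basis (hz : IsZinbiel mul) (hx : GeneratedBy mul x)
    (hdim : Module.finrank ℂ A = n) :
    ∃ b : Module.Basis (Fin n) ℂ A, ∀ i : Fin n, b i = pw mul x i := by
  classical
  set hex := exists_dep (mul := mul) (x := x) hdim with hexdef
  set m := Nat.find hex with hmdef
  have hPm : pw mul x m ∈ Submodule.span ℂ (Set.range fun i : Fin m => pw mul x i) :=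
    Nat.find_spec hex
  have hmin : ∀ j, j < m →
      pw mul x j ∉ Submodule.span ℂ (Set.range fun i : Fin j => pw mul x i) :=
    fun j hj => Nat.find_min hex hj
  -- independence of the first m powers
  have hind : ∀ k, k ≤ m → LinearIndependent ℂ (fun i : Fin k => pw mul x i) := by
    intro k
    induction k with
    | zero => intro _; exact linearIndependent_empty_type
    | succ k ih =>
      intro hk
      have he : (fun i : Fin (k+1) => pw mul x i)
          = Fin.snoc (fun i : Fin k => pw mul x i) (pw mul x k) := by
        funext i
        refine Fin.lastCases ?_ ?_ i
        · simp [Fin.snoc_last]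
        · intro j; simp [Fin.snoc_castSucc]
      rw [he, linearIndependent_fin_snoc]
      exact ⟨ih (by omega), hmin k (by omega)⟩
  set S := Submodule.span ℂ (Set.range fun i : Fin m => pw mul x i) with hSdef
  have hgen : ∀ i : Fin m, pw mul x i ∈ S :=
    fun i => Submodule.subset_span ⟨i, rfl⟩
  have hmem_le : ∀ j : ℕ, j ≤ m → pw mul x j ∈ S := by
    intro j hj
    rcases eq_or_lt_of_le hj with h | h
    · subst h; exact hPm
    · exact hgen ⟨j, h⟩
  have hmapx : ∀ a ∈ S, mul x a ∈ S := by
    intro a ha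
    induction ha using Submodule.span_induction with
    | mem a ha =>
      obtain ⟨i, rfl⟩ := ha
      have : mul x (pw mul x i) = pw mul x (i.val+1) := rfl
      rw [this]
      exact hmem_le _ (by omega)
    | zero => simp
    | add a b _ _ iha ihb => rw [map_add]; exact S.add_mem iha ihb
    | smul r a _ iha => rw [map_smul]; exact S.smul_mem r iha
  have hmem : ∀ k : ℕ, pw mul x k ∈ S := by
    intro k
    induction k with
    | zero => exact hmem_le 0 (by
        rcases Nat.eq_zero_or_pos m with h | h
        · omega
        · omega)
    | succ k ih => exact hmapx _ ih
  have hclosed : ∀ a ∈ S, ∀ b ∈ S, mul a b ∈ S := by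
    intro a ha
    induction ha using Submodule.span_induction with
    | mem a ha =>
      obtain ⟨i, rfl⟩ := ha
      intro b hb
      induction hb using Submodule.span_induction with
      | mem b hb =>
        obtain ⟨j, rfl⟩ := hb
        rw [pw_mul hz]
        exact S.smul_mem _ (hmem _)
      | zero => simp
      | add b c _ _ ihb ihc => rw [map_add]; exact S.add_mem ihb ihc
      | smul r b _ ihb => rw [map_smul]; exact S.smul_mem r ihb
    | zero => intro b hb; simp
    | add a c _ _ iha ihc =>
      intro b hb
      rw [map_add, LinearMap.add_apply]
      exact S.add_mem (iha b hb) (ihc b hb)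
    | smul r a _ iha =>
      intro b hb
      rw [map_smul, LinearMap.smul_apply]
      exact S.smul_mem r (iha b hb)
  have hStop : S = ⊤ := hx S (hmem 0) hclosed
  have hmn : m = n := by
    have h1 : m ≤ n := by
      have := (hind m le_rfl).fintype_card_le_finrank
      simpa [hdim] using this
    have h2 : n ≤ m := by
      have := finrank_le_of_span_eq_top hStop
      simpa [hdim] using this
    omega
  refine ⟨(Module.Basis.mk (hind m le_rfl) (le_of_eq hStop.symm)).reindex (finCongr hmn), fun i => ?_⟩
  rw [Module.Basis.reindex_apply, Module.Basis.mk_apply]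
  simp

end Struct

section Nilp
variable {mul : A →ₗ[ℂ] A →ₗ[ℂ] A} {x : A} {n : ℕ}

lemma pw_nilp (hz : IsZinbiel mul) (hn : 0 < n) (b : Module.Basis (Fin n) ℂ A)
    (hb : ∀ i : Fin n, b i = pw mul x i) :
    pw mul x n = 0 := by
  classical
  set c : Fin n → ℂ := fun i => b.repr (pw mul x n) i with hcdef
  have hqn : pw mul x n = ∑ i : Fin n, c i • pw mul x i := by
    conv_lhs => rw [← b.sum_repr (pw mul x n)]
    exact Finset.sum_congr rfl fun i _ => by rw [hb]
  have h1 : pw mul x (n+1) = ∑ i : Fin n, c i • pw mul x (i.val+1) := by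
    have : pw mul x (n+1) = mul x (pw mul x n) := rfl
    rw [this, hqn, map_sum]
    exact Finset.sum_congr rfl fun i _ => by rw [map_smul]; rfl
  have h2 : mul (pw mul x n) (pw mul x 0) = ((n+1 : ℕ) : ℂ) • pw mul x (n+1) := by
    have := pw_mul hz x n 0
    simpa [Nat.choose_one_right] using this
  have h3 : mul (pw mul x n) (pw mul x 0)
      = ∑ i : Fin n, (c i * ((i.val+1 : ℕ) : ℂ)) • pw mul x (i.val+1) := by
    conv_lhs => rw [hqn]
    rw [map_sum, LinearMap.sum_apply]
    refine Finset.sum_congr rfl fun i _ => ?_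
    rw [map_smul, LinearMap.smul_apply, pw_mul hz x i 0]
    simp [Nat.choose_one_right, smul_smul]
  have hrel : ∑ i : Fin n, (c i * (((i.val : ℕ) : ℂ) - n)) • pw mul x (i.val+1) = 0 := by
    have h4 : ∑ i : Fin n, (c i * ((i.val+1 : ℕ) : ℂ)) • pw mul x (i.val+1)
        = ∑ i : Fin n, (((n+1 : ℕ) : ℂ) * c i) • pw mul x (i.val+1) := by
      rw [← h3, h2, h1, Finset.smul_sum]
      exact Finset.sum_congr rfl fun i _ => by rw [smul_smul]
    have h5 : ∀ i : Fin n, (c i * (((i.val : ℕ) : ℂ) - n)) • pw mul x (i.val+1)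
        = (c i * ((i.val+1 : ℕ) : ℂ)) • pw mul x (i.val+1)
          - (((n+1 : ℕ) : ℂ) * c i) • pw mul x (i.val+1) := by
      intro i
      rw [← sub_smul]
      congr 1
      push_cast
      ring
    rw [Finset.sum_congr rfl fun i _ => h5 i, Finset.sum_sub_distrib, h4, sub_self]
  -- coordinates
  set φ := b.equivFun with hφdef
  have hr : ∀ i k : Fin n, φ (pw mul x (i.val+1)) k
      = if i.val + 1 = n then c k else (if i.val + 1 = k.val then 1 else 0) := by
    intro i k
    by_cases h : i.val + 1 = n
    · rw [if_pos h]
      rw [h, hqn, map_sum]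
      simp only [map_smul]
      rw [Finset.sum_apply]
      have hterm : ∀ j : Fin n, (c j • φ (pw mul x j)) k = c j * (if j = k then 1 else 0) := by
        intro j
        rw [Pi.smul_apply, ← hb j, hφdef, smul_eq_mul]
        congr 1
        exact b.equivFun_self j k
      rw [Finset.sum_congr rfl fun j _ => hterm j]
      simp [Finset.sum_ite_eq]
    · have hlt : i.val + 1 < n := by omega
      rw [if_neg h]
      have h6 : b ⟨i.val+1, hlt⟩ = pw mul x (i.val+1) := by simpa using hb ⟨i.val+1, hlt⟩
      rw [← h6, hφdef, b.equivFun_self]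
      by_cases hk : i.val + 1 = k.val
      · rw [if_pos hk, if_pos (Fin.ext hk)]
      · rw [if_neg hk, if_neg (fun hc => hk (by rw [← hc]))]
  have hEk : ∀ k : Fin n, ∑ i : Fin n, (c i * (((i.val : ℕ) : ℂ) - n))
      * (if i.val + 1 = n then c k else (if i.val + 1 = k.val then 1 else 0)) = 0 := by
    intro k
    have h := congrArg (fun v => φ v k) hrel
    simp only [map_sum, map_zero, Pi.zero_apply, Finset.sum_apply, Pi.smul_apply,
      smul_eq_mul, map_smul] at h
    calc ∑ i : Fin n, (c i * (((i.val : ℕ) : ℂ) - n))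
          * (if i.val + 1 = n then c k else (if i.val + 1 = k.val then 1 else 0))
        = ∑ i : Fin n, c i * (((i.val : ℕ) : ℂ) - n) * φ (pw mul x (i.val+1)) k :=
          Finset.sum_congr rfl fun i _ => by rw [hr i k]
      _ = 0 := h
  set last : Fin n := ⟨n-1, by omega⟩ with hlastdef
  have hlastval : ((last.val : ℕ) : ℂ) - n = -1 := by
    have : ((n-1 : ℕ) : ℂ) = (n : ℂ) - 1 := Nat.cast_pred hn
    rw [hlastdef]
    simp only [this]
    ring
  have hlastsucc : last.val + 1 = n := by rw [hlastdef]; simp; omega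
  have fact1 : c last * c ⟨0, hn⟩ = 0 := by
    have h := hEk ⟨0, hn⟩
    rw [Finset.sum_eq_single last] at h
    · rw [if_pos hlastsucc, hlastval] at h
      calc c last * c ⟨0, hn⟩ = -(c last * -1 * c ⟨0, hn⟩) := by ring
        _ = 0 := by rw [h]; ring
    · intro i _ hine
      have h7 : ¬ (i.val + 1 = n) := by
        intro hcc
        exact hine (Fin.ext (by omega))
      rw [if_neg h7, if_neg (by simp)]
      ring
    · intro hcc; exact absurd (Finset.mem_univ last) hcc
  have fact2 : ∀ i : Fin n, (hj : i.val + 1 < n) →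
      c i * (((i.val : ℕ) : ℂ) - n) - c last * c ⟨i.val+1, hj⟩ = 0 := by
    intro i0 hj
    have h := hEk ⟨i0.val+1, hj⟩
    rw [← Finset.add_sum_erase _ _ (Finset.mem_univ i0)] at h
    have hi0ne : i0 ≠ last := by
      intro hcc
      have : i0.val = n - 1 := congrArg Fin.val hcc
      omega
    rw [Finset.sum_eq_single_of_mem last
      (Finset.mem_erase.mpr ⟨hi0ne.symm, Finset.mem_univ last⟩)] at h
    · rw [if_pos hlastsucc, hlastval] at h
      have h8 : ¬ (i0.val + 1 = n) := by omega
      rw [if_neg h8, if_pos rfl] at h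
      linear_combination h
    · intro i hi hine
      have him : i ≠ i0 := (Finset.mem_erase.mp hi).1
      have h7 : ¬ (i.val + 1 = n) := by
        intro hcc
        refine hine (Fin.ext ?_)
        have : last.val = n - 1 := rfl
        omega
      have h7' : ¬ (i.val + 1 = (⟨i0.val+1, hj⟩ : Fin n).val) := by
        intro hcc
        refine him (Fin.ext ?_)
        have : (⟨i0.val+1, hj⟩ : Fin n).val = i0.val + 1 := rfl
        omega
      rw [if_neg h7, if_neg h7']
      ring
  have hall : ∀ j : ℕ, (hj : j < n) → c ⟨j, hj⟩ = 0 := by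
    by_cases hcl : c last = 0
    · intro j hj
      by_cases hje : j = n - 1
      · have : (⟨j, hj⟩ : Fin n) = last := Fin.ext (by simpa [hlastdef] using hje)
        rw [this]; exact hcl
      · have hj1 : j + 1 < n := by omega
        have h := fact2 ⟨j, hj⟩ hj1
        rw [hcl] at h
        have h10 : c ⟨j, hj⟩ * (((j : ℕ) : ℂ) - n) = 0 := by linear_combination h
        rcases mul_eq_zero.mp h10 with h | h
        · exact h
        · exfalso
          have : ((j : ℕ) : ℂ) = ((n : ℕ) : ℂ) := by linear_combination h
          have : j = n := Nat.cast_injective this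
          omega
    · exfalso
      apply hcl
      have hall0 : ∀ j : ℕ, (hj : j < n) → c ⟨j, hj⟩ = 0 := by
        intro j
        induction j with
        | zero =>
          intro hj
          rcases mul_eq_zero.mp fact1 with h | h
          · exact absurd h hcl
          · exact h
        | succ j ih =>
          intro hj
          by_cases hj1 : j + 1 < n
          · have h := fact2 ⟨j, by omega⟩ hj1
            rw [ih (by omega)] at h
            have h11 : c last * c ⟨j+1, hj1⟩ = 0 := by linear_combination -h
            rcases mul_eq_zero.mp h11 with h | h
            · exact absurd h hcl
            · exact h
          · omega
      have := hall0 (n-1) (by omega)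
      simpa [hlastdef] using this
  have hcz : ∀ i : Fin n, c i = 0 := fun i => by
    have := hall i.val i.isLt
    simpa using this
  rw [hqn]
  simp [hcz]

end Nilp

end Aux

lemma NF_single {n : ℕ} (i j : Fin n) :
    NFmul n (Pi.single i 1) (Pi.single j 1) = fun k => NFc n i j k := by
  have h0 : ∀ (x y : Fin n → ℂ), NFmul n x y = fun k => ∑ a, ∑ b, x a * y b * NFc n a b k :=
    fun x y => rfl
  rw [h0]
  funext k
  rw [Finset.sum_eq_single i]
  · rw [Finset.sum_eq_single j]
    · simp
    · intro b _ hb; simp [Pi.single_apply, hb]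
    · simp
  · intro a _ ha
    rw [Finset.sum_eq_single j]
    · simp [Pi.single_apply, ha]
    · intro b _ hb; simp [Pi.single_apply, hb]
    · simp
  · simp

lemma NF_single' {n : ℕ} (i j : Fin n) :
    NFmul n (Pi.single i 1) (Pi.single j 1)
      = if h : (i : ℕ) + j + 1 < n
        then (((i : ℕ) + j + 1).choose ((j : ℕ) + 1) : ℂ) • (Pi.single (⟨(i : ℕ) + j + 1, h⟩ : Fin n) 1 : Fin n → ℂ)
        else 0 := by
  rw [NF_single]
  by_cases h : (i : ℕ) + j + 1 < n
  · rw [dif_pos h]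
    funext k
    rw [NFc]
    simp only [Pi.smul_apply, Pi.single_apply, smul_eq_mul]
    by_cases hk : (i : ℕ) + j + 1 = (k : ℕ)
    · rw [if_pos hk, if_pos (show k = ⟨(i:ℕ)+j+1, h⟩ from Fin.ext hk.symm)]
      ring
    · rw [if_neg hk, if_neg (show ¬ k = ⟨(i:ℕ)+j+1, h⟩ from
        fun hc => hk (congrArg Fin.val hc).symm)]
      ring
  · rw [dif_neg h]
    funext k
    rw [NFc]
    simp only [Pi.zero_apply]
    rw [if_neg (by intro hc; have := k.isLt; omega)]


lemma NF_gen {n : ℕ} (hn : 0 < n) :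
    GeneratedBy (NFmul n) (Pi.single (⟨0, hn⟩ : Fin n) 1) := by
  intro p hp hclosed
  have step : ∀ j : ℕ, (hj : j < n) → (Pi.single (⟨j, hj⟩ : Fin n) 1 : Fin n → ℂ) ∈ p := by
    intro j
    induction j with
    | zero => intro hj; exact hp
    | succ j ih =>
      intro hj
      have hj' : j < n := by omega
      have h := NF_single' (n := n) ⟨0, hn⟩ ⟨j, hj'⟩
      have hcond : ((⟨0, hn⟩ : Fin n) : ℕ) + (⟨j, hj'⟩ : Fin n) + 1 < n := by
        simpa using hj
      rw [dif_pos hcond] at h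
      have hch : ((((⟨0, hn⟩ : Fin n) : ℕ) + (⟨j, hj'⟩ : Fin n) + 1).choose
          (((⟨j, hj'⟩ : Fin n) : ℕ) + 1) : ℂ) = 1 := by
        norm_num
      rw [hch, one_smul] at h
      have hmem := hclosed _ hp _ (ih hj')
      rw [h] at hmem
      have : (⟨((⟨0, hn⟩ : Fin n) : ℕ) + (⟨j, hj'⟩ : Fin n) + 1, hcond⟩ : Fin n)
          = ⟨j+1, hj⟩ := Fin.ext (by simp)
      rwa [this] at hmem
  rw [eq_top_iff]
  intro v _
  have hv : v = ∑ i : Fin n, v i • (Pi.single i 1 : Fin n → ℂ) := by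
    funext k
    simp [Pi.single_apply, Finset.sum_ite_eq']
  rw [hv]
  refine Submodule.sum_mem p fun i _ => Submodule.smul_mem p _ ?_
  have : i = ⟨i.val, i.isLt⟩ := Fin.ext rfl
  rw [this]
  exact step i.val i.isLt


/-- An `n`-dimensional complex Zinbiel algebra is one-generated iff it is
isomorphic to `NF_n`. -/
theorem one_generated_iff_iso_NF (n : ℕ) (A : Type*) [AddCommGroup A] [Module ℂ A]
    [FiniteDimensional ℂ A]
    (mul : A →ₗ[ℂ] A →ₗ[ℂ] A) (hzin : IsZinbiel mul)
    (hdim : Module.finrank ℂ A = n) :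
    (∃ x : A, GeneratedBy mul x) ↔ Isom mul (NFmul n) := by
  classical
  rcases Nat.eq_zero_or_pos n with hn | hn
  · subst hn
    have hsub : Subsingleton A := Module.finrank_zero_iff.mp hdim
    constructor
    · intro _
      exact ⟨LinearEquiv.ofFinrankEq A (Fin 0 → ℂ) (by rw [hdim]; simp), fun x y => Subsingleton.elim _ _⟩
    · intro _
      refine ⟨0, fun p _ _ => ?_⟩
      rw [eq_top_iff]
      intro a _
      rw [Subsingleton.elim a 0]
      exact p.zero_mem
  · constructor
    · rintro ⟨x, hx⟩
      obtain ⟨b, hb⟩ := span_basis hzin hx hdim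
      have hnil : pw mul x n = 0 := pw_nilp hzin hn b hb
      have hzero : ∀ k : ℕ, n ≤ k → pw mul x k = 0 := by
        intro k
        induction k with
        | zero => intro hk; omega
        | succ k ih =>
          intro hk
          rcases (by omega : n = k + 1 ∨ n ≤ k) with h | h
          · rw [← h]; exact hnil
          · have : pw mul x (k+1) = mul x (pw mul x k) := rfl
            rw [this, ih h, map_zero]
      set f := b.equivFun with hfdef
      have hfb : ∀ l : Fin n, f (b l) = Pi.single l 1 := by
        intro l
        funext k
        rw [hfdef, b.equivFun_self, Pi.single_apply]
        simp [eq_comm]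
      have hB : mul.compr₂ (f : A →ₗ[ℂ] (Fin n → ℂ))
          = (NFmul n).compl₁₂ (f : A →ₗ[ℂ] (Fin n → ℂ)) (f : A →ₗ[ℂ] (Fin n → ℂ)) := by
        refine b.ext fun i => b.ext fun j => ?_
        show f (mul (b i) (b j)) = NFmul n (f (b i)) (f (b j))
        rw [hfb i, hfb j, NF_single', hb i, hb j, pw_mul hzin, map_smul]
        by_cases h : (i : ℕ) + j + 1 < n
        · rw [dif_pos h]
          congr 1
          have h6 : b ⟨(i : ℕ) + j + 1, h⟩ = pw mul x ((i : ℕ) + j + 1) := by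
            simpa using hb ⟨(i : ℕ) + j + 1, h⟩
          rw [← h6, hfb]
        · rw [dif_neg h, hzero ((i : ℕ) + j + 1) (by omega), map_zero, smul_zero]
      refine ⟨f, fun u v => ?_⟩
      have := LinearMap.congr_fun (LinearMap.congr_fun hB u) v
      simpa [LinearMap.compr₂_apply, LinearMap.compl₁₂_apply] using this
    · rintro ⟨f, hf⟩
      refine ⟨f.symm (Pi.single (⟨0, hn⟩ : Fin n) 1), ?_⟩
      intro p hp hcl
      set q := p.map (f : A →ₗ[ℂ] (Fin n → ℂ)) with hqdef
      have hq0 : (Pi.single (⟨0, hn⟩ : Fin n) 1 : Fin n → ℂ) ∈ q :=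
        Submodule.mem_map.mpr ⟨_, hp, f.apply_symm_apply _⟩
      have hqcl : ∀ a ∈ q, ∀ b ∈ q, NFmul n a b ∈ q := by
        rintro a ha b hb
        obtain ⟨a', ha', rfl⟩ := Submodule.mem_map.mp ha
        obtain ⟨b', hb', rfl⟩ := Submodule.mem_map.mp hb
        exact Submodule.mem_map.mpr ⟨mul a' b', hcl a' ha' b' hb', hf a' b'⟩
      have hqt := NF_gen hn q hq0 hqcl
      rw [eq_top_iff]
      intro a _
      have : f a ∈ q := hqt ▸ Submodule.mem_top
      obtain ⟨a', ha', he⟩ := Submodule.mem_map.mp this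
      rwa [← f.injective he]
end
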